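/- Let H1 and H2 be homothets of a strictly convex domain C in ℝ² whose intersection is proper, and let p be one of the two points in bd(H1) ∩ bd(H2). Then p is a singular point of H1 ∩ H2: the convex body H1 ∩ H2 has at least two distinct supporting lines at p. -/

import Mathlib

open Pointwise
open scoped RealInnerProductSpace

abbrev Plane := EuclideanSpace ℝ (Fin 2)

/-- A convex domain: compact, convex, with nonempty interior. -/
def IsConvexDomain (C : Set Plane) : Prop :=
  IsCompact C ∧ Convex ℝ C ∧ (interior C).Nonempty

/-- A strictly convex domain: a convex domain where the open segment between any two
distinct boundary points lies in the interior. -/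
def IsStrictConvexDomain (C : Set Plane) : Prop :=
  IsConvexDomain C ∧
    ∀ x ∈ frontier C, ∀ y ∈ frontier C, x ≠ y → openSegment ℝ x y ⊆ interior C

/-- `u` is an outer unit normal of a supporting line of `C` at `x`. -/
def IsOuterNormalAt (C : Set Plane) (x u : Plane) : Prop :=
  ‖u‖ = 1 ∧ ∀ y ∈ C, (inner ℝ u y : ℝ) ≤ inner ℝ u x

/-- A singular boundary point: a boundary point admitting two distinct supporting lines
(equivalently, two distinct outer unit normals). -/
def IsSingularPt (C : Set Plane) (x : Plane) : Prop :=
  x ∈ frontier C ∧ ∃ u v : Plane, u ≠ v ∧ IsOuterNormalAt C x u ∧ IsOuterNormalAt C x v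

/-- Smooth: every boundary point has a unique outer unit normal (unique supporting line). -/
def IsSmoothDomain (C : Set Plane) : Prop :=
  ∀ x ∈ frontier C, ∃! u : Plane, IsOuterNormalAt C x u

/-!
Take outer normals `u` of `H₁` and `v` of `H₂` at `p`; both are outer normals of `H₁ ∩ H₂`.
If `u = v`, pull `p` back to `C` along the two homotheties: both preimages maximize `⟪u, ·⟫`
on `C`, and by strict convexity this maximizer is unique. Hence `x₁ + l₁ • s = p = x₂ + l₂ • s`
for one `s ∈ C`, and if `l₁ ≤ l₂` the homothety with centre `p` and ratio `l₁ / l₂` maps `H₂` onto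
`H₁`; as `p ∈ H₂` and `H₂` is convex, `H₁ ⊆ H₂`, which properness forbids.
-/

open Set

section InnerProductSpace

variable {E : Type*} [NormedAddCommGroup E] [InnerProductSpace ℝ E]

lemma not_forall_inner_le_of_mem_interior {K : Set E} {u z : E} (hu : u ≠ 0)
    (hz : z ∈ interior K) : ¬ ∀ y ∈ K, ⟪u, y⟫ ≤ ⟪u, z⟫ := by
  intro hmax
  have hloc : IsLocalMax (fun y => ⟪u, y⟫) z :=
    (isMaxOn_iff.2 hmax).isLocalMax (mem_interior_iff_mem_nhds.1 hz)
  have h0 := hloc.hasFDerivAt_eq_zero (innerSL ℝ u).hasFDerivAt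
  exact hu (by simpa using congr($h0 u))

lemma exists_unit_inner_le_of_mem_frontier [CompleteSpace E] {K : Set E} (hK : Convex ℝ K)
    (hKi : (interior K).Nonempty) {p : E} (hp : p ∈ frontier K) :
    ∃ u : E, ‖u‖ = 1 ∧ ∀ y ∈ K, ⟪u, y⟫ ≤ ⟪u, p⟫ := by
  obtain ⟨f, hf⟩ := geometric_hahn_banach_open_point hK.interior isOpen_interior hp.2
  obtain ⟨a, ha⟩ := hKi
  set w := (InnerProductSpace.toDual ℝ E).symm f
  have hw : ∀ y, ⟪w, y⟫ = f y := fun y => InnerProductSpace.toDual_symm_apply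
  have hle : ∀ y ∈ K, f y ≤ f p := by
    have hcl : closure (interior K) ⊆ {y | f y ≤ f p} :=
      closure_minimal (fun y hy => (hf y hy).le) (isClosed_le f.continuous continuous_const)
    rw [hK.closure_interior_eq_closure_of_nonempty_interior ⟨a, ha⟩] at hcl
    exact fun y hy => hcl (subset_closure hy)
  have hw0 : w ≠ 0 := by
    rintro h0
    simpa [← hw, h0] using hf a ha
  refine ⟨‖w‖⁻¹ • w, norm_smul_inv_norm hw0, fun y hy => ?_⟩
  simp only [real_inner_smul_left, hw]
  exact mul_le_mul_of_nonneg_left (hle y hy) (by positivity)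

end InnerProductSpace

section Homothety

variable {E : Type*} [AddCommGroup E] [Module ℝ E]

lemma mem_vadd_smul_set_iff {C : Set E} {x q : E} {l : ℝ} :
    q ∈ x +ᵥ l • C ↔ ∃ c ∈ C, x + l • c = q := by
  simp only [mem_vadd_set, mem_smul_set, vadd_eq_add]
  constructor
  · rintro ⟨_, ⟨c, hc, rfl⟩, rfl⟩
    exact ⟨c, hc, rfl⟩
  · rintro ⟨c, hc, rfl⟩
    exact ⟨_, ⟨c, hc, rfl⟩, rfl⟩

lemma vadd_smul_set_subset_of_eq {C : Set E} (hC : Convex ℝ C) {x₁ x₂ s : E} {l₁ l₂ : ℝ}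
    (hl₁ : 0 < l₁) (hle : l₁ ≤ l₂) (hs : s ∈ C) (heq : x₁ + l₁ • s = x₂ + l₂ • s) :
    x₁ +ᵥ l₁ • C ⊆ x₂ +ᵥ l₂ • C := by
  have hl₂ : 0 < l₂ := hl₁.trans_le hle
  rintro q hq
  obtain ⟨c, hc, rfl⟩ := mem_vadd_smul_set_iff.1 hq
  refine mem_vadd_smul_set_iff.2 ⟨(1 - l₁ / l₂) • s + (l₁ / l₂) • c,
    hC hs hc (sub_nonneg.2 ((div_le_one hl₂).2 hle)) (by positivity) (by ring), ?_⟩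
  have hratio : l₂ * (l₁ / l₂) = l₁ := mul_div_cancel₀ l₁ hl₂.ne'
  simp only [smul_add, smul_smul, mul_sub, mul_one, hratio]
  linear_combination (norm := module) -heq

end Homothety

lemma IsOuterNormalAt.mono {K K' : Set Plane} {x u : Plane} (h : IsOuterNormalAt K x u)
    (hK : K' ⊆ K) : IsOuterNormalAt K' x u :=
  ⟨h.1, fun y hy => h.2 y (hK hy)⟩

lemma IsOuterNormalAt.of_vadd_smul {C : Set Plane} {x s u : Plane} {l : ℝ} (hl : 0 < l)
    (h : IsOuterNormalAt (x +ᵥ l • C) (x + l • s) u) : IsOuterNormalAt C s u := by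
  refine ⟨h.1, fun c hc => ?_⟩
  have hc' := h.2 (x + l • c) (mem_vadd_smul_set_iff.2 ⟨c, hc, rfl⟩)
  simp only [inner_add_right, real_inner_smul_right] at hc'
  exact le_of_mul_le_mul_left (by linarith) hl

lemma IsStrictConvexDomain.eq_of_isOuterNormalAt {C : Set Plane} (hC : IsStrictConvexDomain C)
    {s t u : Plane} (hs : s ∈ C) (ht : t ∈ C) (hsu : IsOuterNormalAt C s u)
    (htu : IsOuterNormalAt C t u) : s = t := by
  have hu : u ≠ 0 := norm_ne_zero_iff.1 (hsu.1 ▸ one_ne_zero)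
  have hfr : ∀ z ∈ C, IsOuterNormalAt C z u → z ∈ frontier C := fun z hz hzu =>
    ⟨subset_closure hz, fun hzi => not_forall_inner_le_of_mem_interior hu hzi hzu.2⟩
  by_contra hst
  have hmid : (1 / 2 : ℝ) • s + (1 / 2 : ℝ) • t ∈ interior C :=
    hC.2 s (hfr s hs hsu) t (hfr t ht htu) hst
      ⟨1 / 2, 1 / 2, by norm_num, by norm_num, by norm_num, rfl⟩
  have hst' : ⟪u, s⟫ = ⟪u, t⟫ := le_antisymm (htu.2 s hs) (hsu.2 t ht)
  refine not_forall_inner_le_of_mem_interior hu hmid fun c hc => ?_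
  rw [inner_add_right, real_inner_smul_right, real_inner_smul_right, ← hst']
  linarith [hsu.2 c hc]

lemma IsStrictConvexDomain.vadd_smul_set_subset_or_subset {C : Set Plane}
    (hC : IsStrictConvexDomain C) {x₁ x₂ p u : Plane} {l₁ l₂ : ℝ} (hl₁ : 0 < l₁) (hl₂ : 0 < l₂)
    (hp₁ : p ∈ x₁ +ᵥ l₁ • C) (hp₂ : p ∈ x₂ +ᵥ l₂ • C)
    (hu₁ : IsOuterNormalAt (x₁ +ᵥ l₁ • C) p u) (hu₂ : IsOuterNormalAt (x₂ +ᵥ l₂ • C) p u) :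
    x₁ +ᵥ l₁ • C ⊆ x₂ +ᵥ l₂ • C ∨ x₂ +ᵥ l₂ • C ⊆ x₁ +ᵥ l₁ • C := by
  obtain ⟨s₁, hs₁, rfl⟩ := mem_vadd_smul_set_iff.1 hp₁
  obtain ⟨s₂, hs₂, hp⟩ := mem_vadd_smul_set_iff.1 hp₂
  rw [← hp] at hu₂
  obtain rfl := hC.eq_of_isOuterNormalAt hs₁ hs₂ (hu₁.of_vadd_smul hl₁) (hu₂.of_vadd_smul hl₂)
  rcases le_total l₁ l₂ with hle | hle
  · exact .inl (vadd_smul_set_subset_of_eq hC.1.2.1 hl₁ hle hs₁ hp.symm)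
  · exact .inr (vadd_smul_set_subset_of_eq hC.1.2.1 hl₂ hle hs₁ hp)

theorem stmt15 (C H1 H2 : Set Plane) (x1 x2 : Plane) (l1 l2 : ℝ)
    (hC : IsStrictConvexDomain C) (hl1 : 0 < l1) (hl2 : 0 < l2)
    (hH1 : H1 = x1 +ᵥ l1 • C) (hH2 : H2 = x2 +ᵥ l2 • C)
    (hint : (interior (H1 ∩ H2)).Nonempty)
    (hred1 : H1 ∩ H2 ⊂ H1) (hred2 : H1 ∩ H2 ⊂ H2)
    (p : Plane) (hp : p ∈ frontier H1 ∩ frontier H2) :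
    IsSingularPt (H1 ∩ H2) p := by
  subst hH1 hH2
  have hclosed (x : Plane) (l : ℝ) : IsClosed (x +ᵥ l • C) := ((hC.1.1.smul l).vadd x).isClosed
  have hconv (x : Plane) (l : ℝ) : Convex ℝ (x +ᵥ l • C) := (hC.1.2.1.smul l).vadd x
  have hpK : p ∈ (x1 +ᵥ l1 • C) ∩ (x2 +ᵥ l2 • C) :=
    ⟨(hclosed x1 l1).frontier_subset hp.1, (hclosed x2 l2).frontier_subset hp.2⟩
  have hpfr : p ∈ frontier ((x1 +ᵥ l1 • C) ∩ (x2 +ᵥ l2 • C)) :=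
    ⟨subset_closure hpK, fun hpi => hp.1.2 (interior_mono inter_subset_left hpi)⟩
  obtain ⟨u, hu⟩ : ∃ u, IsOuterNormalAt (x1 +ᵥ l1 • C) p u :=
    exists_unit_inner_le_of_mem_frontier (hconv x1 l1)
      (hint.mono (interior_mono inter_subset_left)) hp.1
  obtain ⟨v, hv⟩ : ∃ v, IsOuterNormalAt (x2 +ᵥ l2 • C) p v :=
    exists_unit_inner_le_of_mem_frontier (hconv x2 l2)
      (hint.mono (interior_mono inter_subset_right)) hp.2
  refine ⟨hpfr, u, v, ?_, hu.mono inter_subset_left, hv.mono inter_subset_right⟩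
  rintro rfl
  rcases hC.vadd_smul_set_subset_or_subset hl1 hl2 hpK.1 hpK.2 hu hv with h | h
  · exact hred1.ne (inter_eq_left.2 h)
  · exact hred2.ne (inter_eq_right.2 h)
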